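/- Let (H, B, φ) be a Hopf bracoid over a field K such that φ is a coalgebra morphism, and set u(h) := φ(h ⊗ 1_B) and Φ(h ⊗ b) := Σ S_B(u(h₍₁₎)) · φ(h₍₂₎ ⊗ b). Then for all h, g ∈ H: S_B(φ(h ⊗ u(g))) = Σ Φ(h₍₁₎ ⊗ S_B(u(g))) · S_B(u(h₍₂₎)). -/

import Mathlib

open TensorProduct LinearMap

noncomputable section

namespace HopfBracoidPaper

variable (K : Type*) [Field K]
variable (H B : Type*) [Ring H] [Ring B] [HopfAlgebra K H] [HopfAlgebra K B]

/-- `u(h) = φ(h ⊗ 1_B)`. -/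
def uMap (φ : H ⊗[K] B →ₗ[K] B) : H →ₗ[K] B :=
  φ ∘ₗ (TensorProduct.mk K H B).flip 1

/-- `Φ(h ⊗ b) = Σ S_B(u(h₍₁₎)) · φ(h₍₂₎ ⊗ b)`. -/
def PhiMap (φ : H ⊗[K] B →ₗ[K] B) : H ⊗[K] B →ₗ[K] B :=
  LinearMap.mul' K B
    ∘ₗ TensorProduct.map (HopfAlgebra.antipode (R := K) ∘ₗ uMap K H B φ) φ
    ∘ₗ (TensorProduct.assoc K H H B).toLinearMap
    ∘ₗ LinearMap.rTensor B (Coalgebra.comul (R := K))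

/-- `(B, φ)` is a left `H`-module. -/
structure IsModuleAction (φ : H ⊗[K] B →ₗ[K] B) : Prop where
  one_act : ∀ b : B, φ ((1 : H) ⊗ₜ[K] b) = b
  mul_act : ∀ (h h' : H) (b : B), φ ((h * h') ⊗ₜ[K] b) = φ (h ⊗ₜ[K] φ (h' ⊗ₜ[K] b))

/-- `(H, B, φ)` is a Hopf bracoid: `(B, φ)` is a left `H`-module and
`φ(h ⊗ b·b') = Σ φ(h₍₁₎ ⊗ b) · Φ(h₍₂₎ ⊗ b')`. -/
structure IsHopfBracoid (φ : H ⊗[K] B →ₗ[K] B) : Prop where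
  one_act : ∀ b : B, φ ((1 : H) ⊗ₜ[K] b) = b
  mul_act : ∀ (h h' : H) (b : B), φ ((h * h') ⊗ₜ[K] b) = φ (h ⊗ₜ[K] φ (h' ⊗ₜ[K] b))
  compat : ∀ (h : H) (b b' : B),
    φ (h ⊗ₜ[K] (b * b')) =
      (LinearMap.mul' K B
        ∘ₗ TensorProduct.map φ (PhiMap K H B φ)
        ∘ₗ (TensorProduct.tensorTensorTensorComm K H H B B).toLinearMap)
        ((Coalgebra.comul (R := K) h) ⊗ₜ[K] (b ⊗ₜ[K] b'))

/-- `φ : H ⊗ B → B` is a coalgebra morphism: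
`ε_B(φ(h ⊗ b)) = ε_H(h) ε_B(b)` and
`δ_B(φ(h ⊗ b)) = Σ φ(h₍₁₎ ⊗ b₍₁₎) ⊗ φ(h₍₂₎ ⊗ b₍₂₎)`. -/
structure IsCoalgebraMorphism (φ : H ⊗[K] B →ₗ[K] B) : Prop where
  counit_comp : ∀ (h : H) (b : B),
    Coalgebra.counit (R := K) (φ (h ⊗ₜ[K] b)) =
      Coalgebra.counit (R := K) h * Coalgebra.counit (R := K) b
  comul_comp : ∀ (h : H) (b : B),
    Coalgebra.comul (R := K) (φ (h ⊗ₜ[K] b)) =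
      (TensorProduct.map φ φ)
        ((TensorProduct.tensorTensorTensorComm K H H B B)
          ((Coalgebra.comul (R := K) h) ⊗ₜ[K] (Coalgebra.comul (R := K) b)))

/-- `(B, ψ)` is a left `H`-module algebra. -/
structure IsModuleAlgebra (ψ : H ⊗[K] B →ₗ[K] B) : Prop where
  one_act : ∀ b : B, ψ ((1 : H) ⊗ₜ[K] b) = b
  mul_act : ∀ (h h' : H) (b : B), ψ ((h * h') ⊗ₜ[K] b) = ψ (h ⊗ₜ[K] ψ (h' ⊗ₜ[K] b))
  act_one : ∀ h : H, ψ (h ⊗ₜ[K] (1 : B)) = Coalgebra.counit (R := K) h • (1 : B)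
  act_mul : ∀ (h : H) (b b' : B),
    ψ (h ⊗ₜ[K] (b * b')) =
      (LinearMap.mul' K B
        ∘ₗ TensorProduct.map ψ ψ
        ∘ₗ (TensorProduct.tensorTensorTensorComm K H H B B).toLinearMap)
        ((Coalgebra.comul (R := K) h) ⊗ₜ[K] (b ⊗ₜ[K] b'))

/-- `π : H → B` is a 1-cocycle with action `γ`. -/
structure IsOneCocycle (π : H →ₗ[K] B) (γ : H ⊗[K] B →ₗ[K] B) : Prop where
  moduleAlgebra : IsModuleAlgebra K H B γ
  counit_comp : ∀ h : H, Coalgebra.counit (R := K) (π h) = Coalgebra.counit (R := K) h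
  comul_comp : ∀ h : H,
    Coalgebra.comul (R := K) (π h) = (TensorProduct.map π π) (Coalgebra.comul (R := K) h)
  cocycle : ∀ h g : H,
    π (h * g) =
      (LinearMap.mul' K B
        ∘ₗ TensorProduct.map π γ
        ∘ₗ (TensorProduct.assoc K H H B).toLinearMap)
        ((Coalgebra.comul (R := K) h) ⊗ₜ[K] π g)


/-- `Φ'(h ⊗ b) = Σ φ(h₍₁₎ ⊗ b) · S_B(u(h₍₂₎))`. -/
def PhiMap' (φ : H ⊗[K] B →ₗ[K] B) : H ⊗[K] B →ₗ[K] B :=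
  LinearMap.mul' K B
    ∘ₗ TensorProduct.map φ (HopfAlgebra.antipode (R := K) ∘ₗ uMap K H B φ)
    ∘ₗ (TensorProduct.assoc K H B H).symm.toLinearMap
    ∘ₗ LinearMap.lTensor H (TensorProduct.comm K H B).toLinearMap
    ∘ₗ (TensorProduct.assoc K H H B).toLinearMap
    ∘ₗ LinearMap.rTensor B (Coalgebra.comul (R := K))

/-- `ψ(h ⊗ b) = Σ π(h₍₁₎) · γ(h₍₂₎ ⊗ b)`. -/
def psiMap (π : H →ₗ[K] B) (γ : H ⊗[K] B →ₗ[K] B) : H ⊗[K] B →ₗ[K] B :=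
  LinearMap.mul' K B
    ∘ₗ TensorProduct.map π γ
    ∘ₗ (TensorProduct.assoc K H H B).toLinearMap
    ∘ₗ LinearMap.rTensor B (Coalgebra.comul (R := K))

/-- `Σ ψ(h₍₂₎ ⊗ b) ⊗ h₍₁₎ = Σ ψ(h₍₁₎ ⊗ b) ⊗ h₍₂₎` in `B ⊗ H`. -/
def SatisfiesStarCondition (ψ : H ⊗[K] B →ₗ[K] B) : Prop :=
  ∀ (h : H) (b : B),
    ((TensorProduct.comm K H B).toLinearMap ∘ₗ LinearMap.lTensor H ψ)
      ((TensorProduct.assoc K H H B) ((Coalgebra.comul (R := K) h) ⊗ₜ[K] b)) =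
    ((TensorProduct.comm K H B).toLinearMap ∘ₗ LinearMap.lTensor H ψ)
      ((TensorProduct.assoc K H H B)
        (((TensorProduct.comm K H H) (Coalgebra.comul (R := K) h)) ⊗ₜ[K] b))

/-- A Hopf algebra is cocommutative if `c ∘ δ = δ`. -/
def IsCocommutative : Prop :=
  ∀ h : H, (TensorProduct.comm K H H) (Coalgebra.comul (R := K) h) = Coalgebra.comul (R := K) h

/-- `x` is a group-like element: `δ(x) = x ⊗ x` and `ε(x) = 1`. -/
def IsGroupLike (x : B) : Prop :=
  Coalgebra.counit (R := K) x = 1 ∧ Coalgebra.comul (R := K) x = x ⊗ₜ[K] x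

/-- `Φᵒᵖ(h ⊗ b) = Σ φ(h₍₂₎ ⊗ b) · S_B(u(h₍₁₎))`: the `Φ`-map of `φ` with respect to the
opposite multiplication of `B`. -/
def PhiOpMap (φ : H ⊗[K] B →ₗ[K] B) : H ⊗[K] B →ₗ[K] B :=
  LinearMap.mul' K B
    ∘ₗ (TensorProduct.comm K B B).toLinearMap
    ∘ₗ TensorProduct.map (HopfAlgebra.antipode (R := K) ∘ₗ uMap K H B φ) φ
    ∘ₗ (TensorProduct.assoc K H H B).toLinearMap
    ∘ₗ LinearMap.rTensor B (Coalgebra.comul (R := K))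


set_option synthInstance.maxHeartbeats 1000000

section Conv
variable {R : Type*} [CommSemiring R] {C : Type*} [AddCommMonoid C] [Module R C]
  [CoalgebraStruct R C] {A : Type*} [Semiring A] [Algebra R A]

open CoalgebraStruct

/-- Convolution product on linear maps from a coalgebra to an algebra. -/
def conv (f g : C →ₗ[R] A) : C →ₗ[R] A :=
  LinearMap.mul' R A ∘ₗ TensorProduct.map f g ∘ₗ CoalgebraStruct.comul

lemma conv_apply (f g : C →ₗ[R] A) (c : C) :
    conv f g c = LinearMap.mul' R A (TensorProduct.map f g (CoalgebraStruct.comul (R := R) c)) :=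
  rfl

lemma mul'_assoc' :
    LinearMap.mul' R A ∘ₗ TensorProduct.map (LinearMap.mul' R A) LinearMap.id =
      LinearMap.mul' R A ∘ₗ TensorProduct.map LinearMap.id (LinearMap.mul' R A)
        ∘ₗ (TensorProduct.assoc R A A A).toLinearMap := by
  apply TensorProduct.ext_threefold
  intro x y z
  simp [mul_assoc]

lemma conv_assoc
    (hco : (TensorProduct.assoc R C C C).toLinearMap ∘ₗ
        (comul (R := R) (A := C)).rTensor C ∘ₗ comul =
      (comul (R := R) (A := C)).lTensor C ∘ₗ comul)
    (f g k : C →ₗ[R] A) :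
    conv (conv f g) k = conv f (conv g k) := by
  unfold conv
  have h1 : TensorProduct.map
      (LinearMap.mul' R A ∘ₗ TensorProduct.map f g ∘ₗ comul) k =
      TensorProduct.map (LinearMap.mul' R A) LinearMap.id
        ∘ₗ TensorProduct.map (TensorProduct.map f g) k
        ∘ₗ (comul (R := R) (A := C)).rTensor C := by
    rw [rTensor, ← TensorProduct.map_comp, ← TensorProduct.map_comp]
    simp
  have h2 : TensorProduct.map f
      (LinearMap.mul' R A ∘ₗ TensorProduct.map g k ∘ₗ comul) =
      TensorProduct.map LinearMap.id (LinearMap.mul' R A)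
        ∘ₗ TensorProduct.map f (TensorProduct.map g k)
        ∘ₗ (comul (R := R) (A := C)).lTensor C := by
    rw [lTensor, ← TensorProduct.map_comp, ← TensorProduct.map_comp]
    simp
  rw [h1, h2]
  calc LinearMap.mul' R A ∘ₗ (TensorProduct.map (LinearMap.mul' R A) LinearMap.id
        ∘ₗ TensorProduct.map (TensorProduct.map f g) k
        ∘ₗ (comul (R := R) (A := C)).rTensor C) ∘ₗ comul
      = (LinearMap.mul' R A ∘ₗ TensorProduct.map (LinearMap.mul' R A) LinearMap.id)
        ∘ₗ TensorProduct.map (TensorProduct.map f g) k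
        ∘ₗ (comul (R := R) (A := C)).rTensor C ∘ₗ comul := by
        simp only [LinearMap.comp_assoc]
    _ = LinearMap.mul' R A ∘ₗ TensorProduct.map LinearMap.id (LinearMap.mul' R A)
        ∘ₗ ((TensorProduct.assoc R A A A).toLinearMap
        ∘ₗ TensorProduct.map (TensorProduct.map f g) k)
        ∘ₗ (comul (R := R) (A := C)).rTensor C ∘ₗ comul := by
        rw [mul'_assoc']; simp only [LinearMap.comp_assoc]
    _ = LinearMap.mul' R A ∘ₗ TensorProduct.map LinearMap.id (LinearMap.mul' R A)
        ∘ₗ TensorProduct.map f (TensorProduct.map g k)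
        ∘ₗ ((TensorProduct.assoc R C C C).toLinearMap
        ∘ₗ (comul (R := R) (A := C)).rTensor C ∘ₗ comul) := by
        rw [← TensorProduct.map_map_comp_assoc_eq]; simp only [LinearMap.comp_assoc]
    _ = LinearMap.mul' R A ∘ₗ (TensorProduct.map LinearMap.id (LinearMap.mul' R A)
        ∘ₗ TensorProduct.map f (TensorProduct.map g k)
        ∘ₗ (comul (R := R) (A := C)).lTensor C) ∘ₗ comul := by
        rw [hco]; simp only [LinearMap.comp_assoc]

lemma conv_unit_right
    (hr : (counit (R := R) (A := C)).lTensor C ∘ₗ comul = (TensorProduct.mk R C R).flip 1)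
    (f : C →ₗ[R] A) :
    conv f (Algebra.linearMap R A ∘ₗ counit) = f := by
  have : TensorProduct.map f (Algebra.linearMap R A ∘ₗ counit) =
      TensorProduct.map LinearMap.id (Algebra.linearMap R A)
        ∘ₗ (f.rTensor R) ∘ₗ (counit (R := R) (A := C)).lTensor C := by
    rw [rTensor, lTensor, ← TensorProduct.map_comp, ← TensorProduct.map_comp]
    simp
  unfold conv
  rw [this]
  apply LinearMap.ext; intro c
  have := LinearMap.congr_fun hr c
  simp only [LinearMap.comp_apply] at this ⊢
  rw [this]
  simp [Algebra.algebraMap_eq_smul_one]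

lemma conv_unit_left
    (hl : (counit (R := R) (A := C)).rTensor C ∘ₗ comul = TensorProduct.mk R R C 1)
    (f : C →ₗ[R] A) :
    conv (Algebra.linearMap R A ∘ₗ counit) f = f := by
  have : TensorProduct.map (Algebra.linearMap R A ∘ₗ counit) f =
      TensorProduct.map (Algebra.linearMap R A) LinearMap.id
        ∘ₗ (f.lTensor R) ∘ₗ (counit (R := R) (A := C)).rTensor C := by
    rw [rTensor, lTensor, ← TensorProduct.map_comp, ← TensorProduct.map_comp]
    simp
  unfold conv
  rw [this]
  apply LinearMap.ext; intro c
  have := LinearMap.congr_fun hl c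
  simp only [LinearMap.comp_apply] at this ⊢
  rw [this]
  simp [Algebra.algebraMap_eq_smul_one]

end Conv

section TTT
variable {R : Type*} [CommSemiring R]
variable {M N P Q M' N' P' Q' : Type*}
  [AddCommMonoid M] [AddCommMonoid N] [AddCommMonoid P] [AddCommMonoid Q]
  [AddCommMonoid M'] [AddCommMonoid N'] [AddCommMonoid P'] [AddCommMonoid Q']
  [Module R M] [Module R N] [Module R P] [Module R Q]
  [Module R M'] [Module R N'] [Module R P'] [Module R Q']

lemma ttt_nat (f : M →ₗ[R] M') (g : N →ₗ[R] N') (p : P →ₗ[R] P') (q : Q →ₗ[R] Q') :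
    (TensorProduct.tensorTensorTensorComm R M' N' P' Q').toLinearMap
        ∘ₗ TensorProduct.map (TensorProduct.map f g) (TensorProduct.map p q) =
      TensorProduct.map (TensorProduct.map f p) (TensorProduct.map g q)
        ∘ₗ (TensorProduct.tensorTensorTensorComm R M N P Q).toLinearMap := by
  apply TensorProduct.ext_fourfold'
  intro m n p' q'
  simp

lemma ttt_nat_apply (f : M →ₗ[R] M') (g : N →ₗ[R] N') (p : P →ₗ[R] P') (q : Q →ₗ[R] Q')
    (s : M ⊗[R] N) (t : P ⊗[R] Q) :
    TensorProduct.map (TensorProduct.map f p) (TensorProduct.map g q)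
        (TensorProduct.tensorTensorTensorComm R M N P Q (s ⊗ₜ t)) =
      TensorProduct.tensorTensorTensorComm R M' N' P' Q'
        ((TensorProduct.map f g s) ⊗ₜ (TensorProduct.map p q t)) := by
  have := LinearMap.congr_fun (ttt_nat (R := R) f g p q) (s ⊗ₜ t)
  simpa using this.symm

end TTT

section TensorCoalgebra
variable {R : Type*} [CommSemiring R]
variable {A₁ A₂ : Type*} [AddCommMonoid A₁] [AddCommMonoid A₂] [Module R A₁] [Module R A₂]
  [Coalgebra R A₁] [Coalgebra R A₂]

open Coalgebra

lemma struct1 {M N : Type*} [AddCommMonoid M] [AddCommMonoid N] [Module R M] [Module R N] :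
    ∀ (xA : M ⊗[R] (M ⊗[R] M)) (xB : N ⊗[R] (N ⊗[R] N)),
    (TensorProduct.assoc R (M ⊗[R] N) (M ⊗[R] N) (M ⊗[R] N))
      (TensorProduct.map (TensorProduct.tensorTensorTensorComm R M M N N).toLinearMap
        LinearMap.id
        ((TensorProduct.tensorTensorTensorComm R (M ⊗[R] M) M (N ⊗[R] N) N)
          (((TensorProduct.assoc R M M M).symm xA) ⊗ₜ ((TensorProduct.assoc R N N N).symm xB)))) =
    TensorProduct.map LinearMap.id (TensorProduct.tensorTensorTensorComm R M M N N).toLinearMap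
      ((TensorProduct.tensorTensorTensorComm R M (M ⊗[R] M) N (N ⊗[R] N)) (xA ⊗ₜ xB)) := by
  intro xA xB
  induction xA using TensorProduct.induction_on with
  | zero => simp
  | add y z hy hz => simp only [TensorProduct.add_tmul, map_add, TensorProduct.tmul_add] at *
                     rw [hy, hz]
  | tmul x u =>
    induction xB using TensorProduct.induction_on with
    | zero => simp
    | add y z hy hz => simp only [TensorProduct.add_tmul, map_add, TensorProduct.tmul_add] at *
                       rw [hy, hz]
    | tmul pp v =>
      induction u using TensorProduct.induction_on with
      | zero => simp
      | add y z hy hz => simp only [TensorProduct.add_tmul, map_add, TensorProduct.tmul_add] at *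
                         rw [hy, hz]
      | tmul y z =>
        induction v using TensorProduct.induction_on with
        | zero => simp
        | add y' z' hy hz => simp only [TensorProduct.add_tmul, map_add,
                               TensorProduct.tmul_add] at *
                             rw [hy, hz]
        | tmul q r => simp

lemma comul₂_tmul (a : A₁) (b : A₂) :
    Coalgebra.comul (R := R) (a ⊗ₜ[R] b) =
      TensorProduct.tensorTensorTensorComm R A₁ A₁ A₂ A₂
        ((Coalgebra.comul (R := R) a) ⊗ₜ (Coalgebra.comul (R := R) b)) := rfl

lemma counit₂_tmul (a : A₁) (b : A₂) :
    Coalgebra.counit (R := R) (a ⊗ₜ[R] b) =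
      Coalgebra.counit (R := R) a * Coalgebra.counit (R := R) b := by
  rw [TensorProduct.counit_tmul, smul_eq_mul, mul_comm]

lemma coassoc₂ :
    (TensorProduct.assoc R (A₁ ⊗[R] A₂) (A₁ ⊗[R] A₂) (A₁ ⊗[R] A₂)).toLinearMap
        ∘ₗ (Coalgebra.comul (R := R) (A := A₁ ⊗[R] A₂)).rTensor (A₁ ⊗[R] A₂)
        ∘ₗ Coalgebra.comul =
      (Coalgebra.comul (R := R) (A := A₁ ⊗[R] A₂)).lTensor (A₁ ⊗[R] A₂)
        ∘ₗ Coalgebra.comul := by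
  apply TensorProduct.ext'
  intro a b
  simp only [LinearMap.comp_apply, LinearEquiv.coe_coe]
  rw [comul₂_tmul]
  have expandR : (Coalgebra.comul (R := R) (A := A₁ ⊗[R] A₂)).rTensor (A₁ ⊗[R] A₂) =
      TensorProduct.map (TensorProduct.tensorTensorTensorComm R A₁ A₁ A₂ A₂).toLinearMap
          LinearMap.id
        ∘ₗ TensorProduct.map
            (TensorProduct.map (Coalgebra.comul (R := R)) (Coalgebra.comul (R := R)))
            (TensorProduct.map LinearMap.id LinearMap.id) := by
    rw [← TensorProduct.map_comp]
    simp only [TensorProduct.map_id, LinearMap.id_comp, LinearMap.comp_id]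
    rfl
  have expandL : (Coalgebra.comul (R := R) (A := A₁ ⊗[R] A₂)).lTensor (A₁ ⊗[R] A₂) =
      TensorProduct.map LinearMap.id
          (TensorProduct.tensorTensorTensorComm R A₁ A₁ A₂ A₂).toLinearMap
        ∘ₗ TensorProduct.map (TensorProduct.map LinearMap.id LinearMap.id)
            (TensorProduct.map (Coalgebra.comul (R := R)) (Coalgebra.comul (R := R))) := by
    rw [← TensorProduct.map_comp]
    simp only [TensorProduct.map_id, LinearMap.id_comp, LinearMap.comp_id]
    rfl
  rw [expandR, expandL]
  simp only [LinearMap.comp_apply]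
  rw [ttt_nat_apply, ttt_nat_apply]
  have hA : TensorProduct.map (Coalgebra.comul (R := R)) LinearMap.id
        (Coalgebra.comul (R := R) a) =
      (TensorProduct.assoc R A₁ A₁ A₁).symm
        (TensorProduct.map LinearMap.id (Coalgebra.comul (R := R))
          (Coalgebra.comul (R := R) a)) := by
    rw [show TensorProduct.map (Coalgebra.comul (R := R) (A := A₁)) LinearMap.id =
        (Coalgebra.comul (R := R) (A := A₁)).rTensor A₁ from rfl,
      show TensorProduct.map LinearMap.id (Coalgebra.comul (R := R) (A := A₁)) =
        (Coalgebra.comul (R := R) (A := A₁)).lTensor A₁ from rfl]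
    rw [Coalgebra.coassoc_symm_apply]
  have hB : TensorProduct.map (Coalgebra.comul (R := R)) LinearMap.id
        (Coalgebra.comul (R := R) b) =
      (TensorProduct.assoc R A₂ A₂ A₂).symm
        (TensorProduct.map LinearMap.id (Coalgebra.comul (R := R))
          (Coalgebra.comul (R := R) b)) := by
    rw [show TensorProduct.map (Coalgebra.comul (R := R) (A := A₂)) LinearMap.id =
        (Coalgebra.comul (R := R) (A := A₂)).rTensor A₂ from rfl,
      show TensorProduct.map LinearMap.id (Coalgebra.comul (R := R) (A := A₂)) =
        (Coalgebra.comul (R := R) (A := A₂)).lTensor A₂ from rfl]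
    rw [Coalgebra.coassoc_symm_apply]
  rw [hA, hB]
  exact struct1 _ _

lemma rTensor_counit₂ :
    (Coalgebra.counit (R := R) (A := A₁ ⊗[R] A₂)).rTensor (A₁ ⊗[R] A₂)
        ∘ₗ Coalgebra.comul =
      TensorProduct.mk R R (A₁ ⊗[R] A₂) 1 := by
  apply TensorProduct.ext'
  intro a b
  simp only [LinearMap.comp_apply]
  rw [comul₂_tmul]
  have expand : (Coalgebra.counit (R := R) (A := A₁ ⊗[R] A₂)).rTensor (A₁ ⊗[R] A₂) =
      TensorProduct.map (LinearMap.mul' R R) LinearMap.id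
        ∘ₗ TensorProduct.map
            (TensorProduct.map (Coalgebra.counit (R := R)) (Coalgebra.counit (R := R)))
            (TensorProduct.map LinearMap.id LinearMap.id) := by
    rw [← TensorProduct.map_comp]
    simp only [TensorProduct.map_id, LinearMap.id_comp, LinearMap.comp_id]
    rw [rTensor]; congr 1
    apply TensorProduct.ext'; intro a b; rw [counit₂_tmul]; simp
  rw [expand]
  simp only [LinearMap.comp_apply]
  rw [ttt_nat_apply]
  rw [show TensorProduct.map (Coalgebra.counit (R := R) (A := A₁)) LinearMap.id =
      (Coalgebra.counit (R := R) (A := A₁)).rTensor A₁ from rfl,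
    show TensorProduct.map (Coalgebra.counit (R := R) (A := A₂)) LinearMap.id =
      (Coalgebra.counit (R := R) (A := A₂)).rTensor A₂ from rfl,
    Coalgebra.rTensor_counit_comul, Coalgebra.rTensor_counit_comul]
  simp

lemma lTensor_counit₂ :
    (Coalgebra.counit (R := R) (A := A₁ ⊗[R] A₂)).lTensor (A₁ ⊗[R] A₂)
        ∘ₗ Coalgebra.comul =
      (TensorProduct.mk R (A₁ ⊗[R] A₂) R).flip 1 := by
  apply TensorProduct.ext'
  intro a b
  simp only [LinearMap.comp_apply]
  rw [comul₂_tmul]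
  have expand : (Coalgebra.counit (R := R) (A := A₁ ⊗[R] A₂)).lTensor (A₁ ⊗[R] A₂) =
      TensorProduct.map LinearMap.id (LinearMap.mul' R R)
        ∘ₗ TensorProduct.map (TensorProduct.map LinearMap.id LinearMap.id)
            (TensorProduct.map (Coalgebra.counit (R := R)) (Coalgebra.counit (R := R))) := by
    rw [← TensorProduct.map_comp]
    simp only [TensorProduct.map_id, LinearMap.id_comp, LinearMap.comp_id]
    rw [lTensor]; congr 1
    apply TensorProduct.ext'; intro a b; rw [counit₂_tmul]; simp
  rw [expand]
  simp only [LinearMap.comp_apply]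
  rw [ttt_nat_apply]
  rw [show TensorProduct.map LinearMap.id (Coalgebra.counit (R := R) (A := A₁)) =
      (Coalgebra.counit (R := R) (A := A₁)).lTensor A₁ from rfl,
    show TensorProduct.map LinearMap.id (Coalgebra.counit (R := R) (A := A₂)) =
      (Coalgebra.counit (R := R) (A := A₂)).lTensor A₂ from rfl,
    Coalgebra.lTensor_counit_comul, Coalgebra.lTensor_counit_comul]
  simp

end TensorCoalgebra

section BracoidAux

lemma u_tmul (φ : H ⊗[K] B →ₗ[K] B) (x : H) : uMap K H B φ x = φ (x ⊗ₜ[K] 1) := rfl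

lemma u_mul (φ : H ⊗[K] B →ₗ[K] B) (hbr : IsHopfBracoid K H B φ) (x y : H) :
    uMap K H B φ (x * y) = φ (x ⊗ₜ[K] uMap K H B φ y) := by
  rw [u_tmul, hbr.mul_act]
  rfl

lemma counit_u (φ : H ⊗[K] B →ₗ[K] B) (hco : IsCoalgebraMorphism K H B φ) (x : H) :
    Coalgebra.counit (R := K) (uMap K H B φ x) = Coalgebra.counit (R := K) x := by
  rw [u_tmul, hco.counit_comp]
  simp

lemma comul_u (φ : H ⊗[K] B →ₗ[K] B) (hco : IsCoalgebraMorphism K H B φ) (x : H) :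
    Coalgebra.comul (R := K) (uMap K H B φ x) =
      TensorProduct.map (uMap K H B φ) (uMap K H B φ) (Coalgebra.comul (R := K) x) := by
  rw [u_tmul, hco.comul_comp]
  have h2 : (Coalgebra.comul (R := K) (1 : B)) = (1 : B) ⊗ₜ[K] (1 : B) := by
    rw [Bialgebra.comul_one, Algebra.TensorProduct.one_def]
  rw [h2]
  generalize Coalgebra.comul (R := K) x = t
  induction t using TensorProduct.induction_on with
  | zero => simp only [TensorProduct.zero_tmul, LinearEquiv.map_zero, map_zero]
  | tmul a b => simp [uMap]
  | add s t hs ht => simp only [TensorProduct.add_tmul, map_add, hs, ht]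

/-- `f0(h ⊗ g) = S(u(hg))`. -/
def f0Map (φ : H ⊗[K] B →ₗ[K] B) : H ⊗[K] H →ₗ[K] B :=
  HopfAlgebra.antipode (R := K) ∘ₗ uMap K H B φ ∘ₗ LinearMap.mul' K H

/-- `f1(h ⊗ g) = u(hg)`. -/
def f1Map (φ : H ⊗[K] B →ₗ[K] B) : H ⊗[K] H →ₗ[K] B :=
  uMap K H B φ ∘ₗ LinearMap.mul' K H

/-- `f2(h ⊗ g) = Φ(h ⊗ S(u(g)))`. -/
def f2Map (φ : H ⊗[K] B →ₗ[K] B) : H ⊗[K] H →ₗ[K] B :=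
  PhiMap K H B φ ∘ₗ (HopfAlgebra.antipode (R := K) ∘ₗ uMap K H B φ).lTensor H

/-- `w(h ⊗ g) = ε(g) h`. -/
def wMap : H ⊗[K] H →ₗ[K] H :=
  (TensorProduct.rid K H).toLinearMap ∘ₗ (Coalgebra.counit (R := K) (A := H)).lTensor H

/-- `U(h ⊗ g) = ε(g) u(h)`. -/
def bigUMap (φ : H ⊗[K] B →ₗ[K] B) : H ⊗[K] H →ₗ[K] B :=
  uMap K H B φ ∘ₗ wMap K H

/-- `V(h ⊗ g) = ε(g) S(u(h))`. -/
def bigVMap (φ : H ⊗[K] B →ₗ[K] B) : H ⊗[K] H →ₗ[K] B :=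
  (HopfAlgebra.antipode (R := K) ∘ₗ uMap K H B φ) ∘ₗ wMap K H

/-- the convolution unit on `H ⊗ H`. -/
def eMap : H ⊗[K] H →ₗ[K] B :=
  Algebra.linearMap K B ∘ₗ Coalgebra.counit (R := K) (A := H ⊗[K] H)

lemma f0_tmul (φ : H ⊗[K] B →ₗ[K] B) (x y : H) :
    f0Map K H B φ (x ⊗ₜ[K] y) =
      HopfAlgebra.antipode (R := K) (uMap K H B φ (x * y)) := by
  simp [f0Map]

lemma f1_tmul (φ : H ⊗[K] B →ₗ[K] B) (x y : H) :
    f1Map K H B φ (x ⊗ₜ[K] y) = uMap K H B φ (x * y) := by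
  simp [f1Map]

lemma f2_tmul (φ : H ⊗[K] B →ₗ[K] B) (x y : H) :
    f2Map K H B φ (x ⊗ₜ[K] y) =
      PhiMap K H B φ (x ⊗ₜ[K] HopfAlgebra.antipode (R := K) (uMap K H B φ y)) := by
  simp [f2Map]

lemma w_tmul (x y : H) :
    wMap K H (x ⊗ₜ[K] y) = Coalgebra.counit (R := K) y • x := by
  simp [wMap]

lemma bigU_tmul (φ : H ⊗[K] B →ₗ[K] B) (x y : H) :
    bigUMap K H B φ (x ⊗ₜ[K] y) = Coalgebra.counit (R := K) y • uMap K H B φ x := by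
  simp [bigUMap, w_tmul]

lemma bigV_tmul (φ : H ⊗[K] B →ₗ[K] B) (x y : H) :
    bigVMap K H B φ (x ⊗ₜ[K] y) =
      Coalgebra.counit (R := K) y •
        HopfAlgebra.antipode (R := K) (uMap K H B φ x) := by
  simp [bigVMap, w_tmul]

lemma eMap_tmul (x y : H) :
    eMap K H B (x ⊗ₜ[K] y) =
      algebraMap K B (Coalgebra.counit (R := K) x * Coalgebra.counit (R := K) y) := by
  simp only [eMap, LinearMap.comp_apply, counit₂_tmul, Algebra.linearMap_apply]

lemma mul_ttt (s t : H ⊗[K] H) :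
    TensorProduct.map (LinearMap.mul' K H) (LinearMap.mul' K H)
        (TensorProduct.tensorTensorTensorComm K H H H H (s ⊗ₜ t)) = s * t := by
  induction s using TensorProduct.induction_on with
  | zero => simp
  | add s₁ s₂ h₁ h₂ => simp only [TensorProduct.add_tmul, map_add, h₁, h₂, add_mul]
  | tmul x y =>
    induction t using TensorProduct.induction_on with
    | zero => simp
    | add t₁ t₂ h₁ h₂ => simp only [TensorProduct.tmul_add, map_add, h₁, h₂, mul_add]
    | tmul p q => simp [Algebra.TensorProduct.tmul_mul_tmul]

lemma w_ttt (s t : H ⊗[K] H) :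
    TensorProduct.map (wMap K H) (wMap K H)
        (TensorProduct.tensorTensorTensorComm K H H H H (s ⊗ₜ t)) =
      LinearMap.mul' K K (TensorProduct.map (Coalgebra.counit (R := K))
        (Coalgebra.counit (R := K)) t) • s := by
  induction s using TensorProduct.induction_on with
  | zero => simp
  | add s₁ s₂ h₁ h₂ => simp only [TensorProduct.add_tmul, map_add, h₁, h₂, smul_add]
  | tmul x y =>
    induction t using TensorProduct.induction_on with
    | zero => simp
    | add t₁ t₂ h₁ h₂ =>
      simp only [TensorProduct.tmul_add, map_add, h₁, h₂, add_smul]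
    | tmul p q =>
      simp only [tensorTensorTensorComm_tmul, TensorProduct.map_tmul, w_tmul, mul'_apply]
      rw [TensorProduct.tmul_smul, ← TensorProduct.smul_tmul', smul_smul,
        mul_comm (Coalgebra.counit (R := K) q)]

lemma repr_sum_smul {g : H} (rg : Coalgebra.Repr K g (H × H)) :
    ∑ j ∈ rg.index, Coalgebra.counit (R := K) (rg.right j) • rg.left j = g := by
  have h1 := Coalgebra.sum_tmul_counit_eq rg
  have h2 := congrArg (TensorProduct.rid K H) h1
  rw [map_sum] at h2
  simp only [TensorProduct.rid_tmul, one_smul] at h2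
  exact h2

lemma counit_counit_comul (g : H) :
    LinearMap.mul' K K (TensorProduct.map (Coalgebra.counit (R := K))
        (Coalgebra.counit (R := K)) (Coalgebra.comul (R := K) g)) =
      Coalgebra.counit (R := K) g := by
  have rg := Coalgebra.Repr.arbitrary K g
  rw [← rg.eq]
  have h4 := congrArg (Coalgebra.counit (R := K)) (repr_sum_smul K H rg)
  rw [map_sum] at h4
  simp only [map_smul, smul_eq_mul] at h4
  rw [map_sum, map_sum]
  simp only [TensorProduct.map_tmul, mul'_apply]
  rw [← h4]
  apply Finset.sum_congr rfl
  intro j _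
  exact mul_comm _ _

lemma sum_u_antipode {g : H} (φ : H ⊗[K] B →ₗ[K] B) (hco : IsCoalgebraMorphism K H B φ)
    (rg : Coalgebra.Repr K g (H × H)) :
    ∑ j ∈ rg.index, uMap K H B φ (rg.left j) *
        HopfAlgebra.antipode (R := K) (uMap K H B φ (rg.right j)) =
      algebraMap K B (Coalgebra.counit (R := K) g) := by
  have h1 : TensorProduct.map (uMap K H B φ) (uMap K H B φ) (Coalgebra.comul (R := K) g) =
      ∑ j ∈ rg.index, uMap K H B φ (rg.left j) ⊗ₜ[K] uMap K H B φ (rg.right j) := by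
    rw [← rg.eq, map_sum]
    simp
  have h2 := HopfAlgebra.mul_antipode_lTensor_comul_apply (R := K) (uMap K H B φ g)
  rw [comul_u K H B φ hco, h1] at h2
  rw [← counit_u K H B φ hco, ← h2]
  simp [map_sum]

end BracoidAux

section BracoidConv

lemma convC (φ : H ⊗[K] B →ₗ[K] B) (hbr : IsHopfBracoid K H B φ)
    (hco : IsCoalgebraMorphism K H B φ) :
    conv (f0Map K H B φ) (f1Map K H B φ) = eMap K H B := by
  apply TensorProduct.ext'
  intro h g
  rw [conv_apply, comul₂_tmul, eMap_tmul]
  have expand : TensorProduct.map (f0Map K H B φ) (f1Map K H B φ) =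
      (HopfAlgebra.antipode (R := K)).rTensor B
        ∘ₗ TensorProduct.map (uMap K H B φ) (uMap K H B φ)
        ∘ₗ TensorProduct.map (LinearMap.mul' K H) (LinearMap.mul' K H) := by
    unfold f0Map f1Map
    rw [rTensor, ← TensorProduct.map_comp, ← TensorProduct.map_comp]
    simp [LinearMap.comp_assoc]
  rw [expand]
  simp only [LinearMap.comp_apply]
  rw [mul_ttt, ← Bialgebra.comul_mul, ← comul_u K H B φ hco,
    HopfAlgebra.mul_antipode_rTensor_comul_apply, counit_u K H B φ hco,
    Bialgebra.counit_mul]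

lemma convB (φ : H ⊗[K] B →ₗ[K] B) (hco : IsCoalgebraMorphism K H B φ) :
    conv (bigUMap K H B φ) (bigVMap K H B φ) = eMap K H B := by
  apply TensorProduct.ext'
  intro h g
  rw [conv_apply, comul₂_tmul, eMap_tmul]
  have expand : TensorProduct.map (bigUMap K H B φ) (bigVMap K H B φ) =
      (HopfAlgebra.antipode (R := K)).lTensor B
        ∘ₗ TensorProduct.map (uMap K H B φ) (uMap K H B φ)
        ∘ₗ TensorProduct.map (wMap K H) (wMap K H) := by
    unfold bigUMap bigVMap
    rw [lTensor, ← TensorProduct.map_comp, ← TensorProduct.map_comp]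
    simp [LinearMap.comp_assoc]
  rw [expand]
  simp only [LinearMap.comp_apply]
  rw [w_ttt, counit_counit_comul, map_smul, map_smul, ← comul_u K H B φ hco,
    map_smul, HopfAlgebra.mul_antipode_lTensor_comul_apply, counit_u K H B φ hco,
    Algebra.smul_def, ← map_mul, mul_comm]

lemma auxA1 (φ : H ⊗[K] B →ₗ[K] B) (hbr : IsHopfBracoid K H B φ)
    (s : H ⊗[K] H) (p q : H) :
    LinearMap.mul' K B (TensorProduct.map (f1Map K H B φ) (f2Map K H B φ)
        (TensorProduct.tensorTensorTensorComm K H H H H (s ⊗ₜ (p ⊗ₜ q)))) =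
      LinearMap.mul' K B (TensorProduct.map φ (PhiMap K H B φ)
        (TensorProduct.tensorTensorTensorComm K H H B B
          (s ⊗ₜ (uMap K H B φ p ⊗ₜ
            HopfAlgebra.antipode (R := K) (uMap K H B φ q))))) := by
  induction s using TensorProduct.induction_on with
  | zero => simp only [TensorProduct.zero_tmul, LinearEquiv.map_zero, map_zero]
  | add s₁ s₂ h₁ h₂ => simp only [TensorProduct.add_tmul, map_add, h₁, h₂]
  | tmul x y =>
    simp only [tensorTensorTensorComm_tmul, TensorProduct.map_tmul, mul'_apply,
      f1_tmul, f2_tmul]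
    rw [u_mul K H B φ hbr]

lemma convA (φ : H ⊗[K] B →ₗ[K] B) (hbr : IsHopfBracoid K H B φ)
    (hco : IsCoalgebraMorphism K H B φ) :
    conv (f1Map K H B φ) (f2Map K H B φ) = bigUMap K H B φ := by
  apply TensorProduct.ext'
  intro h g
  rw [conv_apply, comul₂_tmul, bigU_tmul]
  set rg := Coalgebra.Repr.arbitrary K g with hrg
  rw [← rg.eq, TensorProduct.tmul_sum, map_sum, map_sum, map_sum]
  have step1 : ∀ j ∈ rg.index,
      LinearMap.mul' K B (TensorProduct.map (f1Map K H B φ) (f2Map K H B φ)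
        (TensorProduct.tensorTensorTensorComm K H H H H
          ((Coalgebra.comul (R := K) h) ⊗ₜ (rg.left j ⊗ₜ rg.right j)))) =
      φ (h ⊗ₜ[K] (uMap K H B φ (rg.left j) *
        HopfAlgebra.antipode (R := K) (uMap K H B φ (rg.right j)))) := by
    intro j _
    rw [auxA1 K H B φ hbr]
    have := hbr.compat h (uMap K H B φ (rg.left j))
      (HopfAlgebra.antipode (R := K) (uMap K H B φ (rg.right j)))
    simp only [LinearMap.comp_apply, LinearEquiv.coe_coe] at this
    rw [← this]
  rw [Finset.sum_congr rfl step1]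
  rw [← map_sum φ (fun j => h ⊗ₜ[K] _) rg.index, ← TensorProduct.tmul_sum,
    sum_u_antipode K H B φ hco rg]
  rw [Algebra.algebraMap_eq_smul_one, TensorProduct.tmul_smul, map_smul]
  rw [u_tmul]

lemma convE (φ : H ⊗[K] B →ₗ[K] B) (h g : H) :
    conv (f2Map K H B φ) (bigVMap K H B φ) (h ⊗ₜ[K] g) =
      LinearMap.mul' K B
        ((TensorProduct.map
            ((PhiMap K H B φ) ∘ₗ
              (TensorProduct.mk K H B).flip
                (HopfAlgebra.antipode (R := K) (uMap K H B φ g)))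
            (HopfAlgebra.antipode (R := K) ∘ₗ uMap K H B φ))
          (Coalgebra.comul (R := K) h)) := by
  rw [conv_apply, comul₂_tmul]
  set rh := Coalgebra.Repr.arbitrary K h with hrh
  set rg := Coalgebra.Repr.arbitrary K g with hrg
  rw [← rh.eq, ← rg.eq]
  rw [TensorProduct.sum_tmul]
  simp only [TensorProduct.tmul_sum, map_sum]
  -- left side: ∑ i ∑ j mul' (map f2 V (ttt ((aᵢ ⊗ bᵢ) ⊗ (lⱼ ⊗ rⱼ))))
  have step : ∀ i ∈ rh.index,
      (∑ j ∈ rg.index, LinearMap.mul' K B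
        (TensorProduct.map (f2Map K H B φ) (bigVMap K H B φ)
          (TensorProduct.tensorTensorTensorComm K H H H H
            ((rh.left i ⊗ₜ rh.right i) ⊗ₜ (rg.left j ⊗ₜ rg.right j))))) =
      PhiMap K H B φ (rh.left i ⊗ₜ[K]
          HopfAlgebra.antipode (R := K) (uMap K H B φ g)) *
        HopfAlgebra.antipode (R := K) (uMap K H B φ (rh.right i)) := by
    intro i _
    have inner : ∀ j ∈ rg.index,
        LinearMap.mul' K B
          (TensorProduct.map (f2Map K H B φ) (bigVMap K H B φ)
            (TensorProduct.tensorTensorTensorComm K H H H H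
              ((rh.left i ⊗ₜ rh.right i) ⊗ₜ (rg.left j ⊗ₜ rg.right j)))) =
        (PhiMap K H B φ (rh.left i ⊗ₜ[K]
            HopfAlgebra.antipode (R := K)
              (uMap K H B φ (Coalgebra.counit (R := K) (rg.right j) • rg.left j)))) *
          HopfAlgebra.antipode (R := K) (uMap K H B φ (rh.right i)) := by
      intro j _
      simp only [tensorTensorTensorComm_tmul, TensorProduct.map_tmul, mul'_apply,
        f2_tmul, bigV_tmul, map_smul, TensorProduct.tmul_smul, smul_mul_assoc,
        mul_smul_comm]
    rw [Finset.sum_congr rfl inner, ← Finset.sum_mul]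
    congr 1
    have lin : ∀ j ∈ rg.index,
        PhiMap K H B φ (rh.left i ⊗ₜ[K]
            HopfAlgebra.antipode (R := K)
              (uMap K H B φ (Coalgebra.counit (R := K) (rg.right j) • rg.left j))) =
        (PhiMap K H B φ ∘ₗ TensorProduct.mk K H B (rh.left i)
            ∘ₗ HopfAlgebra.antipode (R := K) ∘ₗ uMap K H B φ)
          (Coalgebra.counit (R := K) (rg.right j) • rg.left j) := by
      intro j _
      rfl
    rw [Finset.sum_congr rfl lin, ← map_sum, repr_sum_smul K H rg]
    rfl
  rw [Finset.sum_congr rfl step]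
  apply Finset.sum_congr rfl
  intro i _
  simp

end BracoidConv

/-- If `(H, B, φ)` is a Hopf bracoid with `φ` a coalgebra morphism, then
`S_B(φ(h ⊗ u(g))) = Σ Φ(h₍₁₎ ⊗ S_B(u(g))) · S_B(u(h₍₂₎))`. -/
theorem statement16 (φ : H ⊗[K] B →ₗ[K] B)
    (hbr : IsHopfBracoid K H B φ) (hco : IsCoalgebraMorphism K H B φ)
    (h g : H) :
    HopfAlgebra.antipode (R := K) (φ (h ⊗ₜ[K] uMap K H B φ g)) =
      LinearMap.mul' K B
        ((TensorProduct.map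
            ((PhiMap K H B φ) ∘ₗ
              (TensorProduct.mk K H B).flip
                (HopfAlgebra.antipode (R := K) (uMap K H B φ g)))
            (HopfAlgebra.antipode (R := K) ∘ₗ uMap K H B φ))
          (Coalgebra.comul (R := K) h)) := by
  have hAs := coassoc₂ (R := K) (A₁ := H) (A₂ := H)
  have hrc := rTensor_counit₂ (R := K) (A₁ := H) (A₂ := H)
  have hlc := lTensor_counit₂ (R := K) (A₁ := H) (A₂ := H)
  have e2 := convC K H B φ hbr hco
  have e3 := convA K H B φ hbr hco
  have e4 := convB K H B φ hco
  have t1 : f2Map K H B φ = conv (f0Map K H B φ) (bigUMap K H B φ) := by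
    calc f2Map K H B φ
        = conv (eMap K H B) (f2Map K H B φ) := (conv_unit_left hrc _).symm
      _ = conv (conv (f0Map K H B φ) (f1Map K H B φ)) (f2Map K H B φ) := by rw [e2]
      _ = conv (f0Map K H B φ) (conv (f1Map K H B φ) (f2Map K H B φ)) :=
          conv_assoc hAs _ _ _
      _ = conv (f0Map K H B φ) (bigUMap K H B φ) := by rw [e3]
  have e5 : conv (f2Map K H B φ) (bigVMap K H B φ) = f0Map K H B φ := by
    calc conv (f2Map K H B φ) (bigVMap K H B φ)
        = conv (conv (f0Map K H B φ) (bigUMap K H B φ)) (bigVMap K H B φ) := by rw [← t1]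
      _ = conv (f0Map K H B φ) (conv (bigUMap K H B φ) (bigVMap K H B φ)) :=
          conv_assoc hAs _ _ _
      _ = conv (f0Map K H B φ) (eMap K H B) := by rw [e4]
      _ = f0Map K H B φ := conv_unit_right hlc _
  calc HopfAlgebra.antipode (R := K) (φ (h ⊗ₜ[K] uMap K H B φ g))
      = f0Map K H B φ (h ⊗ₜ[K] g) := by rw [f0_tmul, u_mul K H B φ hbr]
    _ = conv (f2Map K H B φ) (bigVMap K H B φ) (h ⊗ₜ[K] g) := by rw [e5]
    _ = _ := convE K H B φ h g


end HopfBracoidPaper
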